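/- If G is a finite simple graph with at least one edge, vs_χ(G) = 1, and χ(G) > Δ(G)/2 + 1, then es_χ(G) = 1. -/
import Mathlib


open SimpleGraph

/-- The chromatic number of a graph, as a natural number (for finite graphs this
is the usual chromatic number). -/
noncomputable def chromNum {V : Type*} (G : SimpleGraph V) : ℕ :=
  sInf {n : ℕ | G.Colorable n}

/-- The maximum degree Δ(G) of a finite graph. -/
noncomputable def maxDeg {V : Type*} [Fintype V] (G : SimpleGraph V) : ℕ :=
  Finset.univ.sup fun v => Nat.card (G.neighborSet v)

/-- The chromatic vertex stability number: the minimum number of vertices whose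
deletion results in a graph with chromatic number χ(G) − 1. -/
noncomputable def vsChi {V : Type*} [Fintype V] (G : SimpleGraph V) : ℕ :=
  sInf {k : ℕ | ∃ S : Finset V, S.card = k ∧
    chromNum (G.induce ((S : Set V))ᶜ) = chromNum G - 1}

/-- The independent chromatic vertex stability number: the minimum size of an
independent set of vertices whose deletion results in a graph with chromatic
number χ(G) − 1. -/
noncomputable def ivsChi {V : Type*} [Fintype V] (G : SimpleGraph V) : ℕ :=
  sInf {k : ℕ | ∃ S : Finset V, S.card = k ∧
    (∀ u ∈ S, ∀ v ∈ S, ¬ G.Adj u v) ∧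
    chromNum (G.induce ((S : Set V))ᶜ) = chromNum G - 1}

/-- The chromatic edge stability number: the minimum number of edges whose
deletion results in a graph with chromatic number χ(G) − 1. -/
noncomputable def esChi {V : Type*} (G : SimpleGraph V) : ℕ :=
  sInf {k : ℕ | ∃ F : Finset (Sym2 V), ↑F ⊆ G.edgeSet ∧ F.card = k ∧
    chromNum (G.deleteEdges ↑F) = chromNum G - 1}

lemma chromNum_colorable {V : Type*} [Fintype V] (G : SimpleGraph V) :
    G.Colorable (chromNum G) :=
  Nat.sInf_mem (s := {n : ℕ | G.Colorable n}) ⟨Fintype.card V, G.colorable_of_fintype⟩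

lemma chromNum_le {V : Type*} (G : SimpleGraph V) {n : ℕ} (h : G.Colorable n) :
    chromNum G ≤ n := Nat.sInf_le h

lemma not_colorable_of_lt_chromNum {V : Type*} (G : SimpleGraph V) {n : ℕ}
    (h : n < chromNum G) : ¬ G.Colorable n := Nat.notMem_of_lt_sInf h

/-- If $G$ is a finite simple graph with at least one edge, $vs_χ(G) = 1$,
and $χ(G) > Δ(G)/2 + 1$, then $es_χ(G) = 1$. -/
theorem stmt_6 {V : Type*} [Fintype V] (G : SimpleGraph V)
    (hedge : G.edgeSet.Nonempty)
    (hvs : vsChi G = 1)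
    (hchi : (chromNum G : ℝ) > (maxDeg G : ℝ) / 2 + 1) :
    esChi G = 1 := by
  classical
  obtain ⟨e, he⟩ := hedge
  induction e using Sym2.ind with
  | _ a b =>
  rw [SimpleGraph.mem_edgeSet] at he
  -- chromatic number is at least 2
  have hc2 : 2 ≤ chromNum G := by
    by_contra h
    push_neg at h
    have h1 : G.Colorable 1 := (chromNum_colorable G).mono (by omega)
    obtain ⟨C⟩ := h1
    exact (C.valid he) (Subsingleton.elim _ _)
  obtain ⟨k, hk⟩ : ∃ k, chromNum G = k + 1 := ⟨chromNum G - 1, by omega⟩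
  have hk0 : 0 < k := by omega
  -- extract the vertex v from vsChi = 1
  have hvsne : {m : ℕ | ∃ S : Finset V, S.card = m ∧
      chromNum (G.induce ((S : Set V))ᶜ) = chromNum G - 1}.Nonempty := by
    by_contra h
    rw [Set.not_nonempty_iff_eq_empty] at h
    rw [vsChi, h, Nat.sInf_empty] at hvs
    exact one_ne_zero hvs.symm
  obtain ⟨S, hS1, hSchrom⟩ : ∃ S : Finset V, S.card = 1 ∧
      chromNum (G.induce ((S : Set V))ᶜ) = chromNum G - 1 := by
    have hm := Nat.sInf_mem hvsne
    rw [show sInf _ = vsChi G from rfl, hvs] at hm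
    exact hm
  obtain ⟨v, rfl⟩ := Finset.card_eq_one.mp hS1
  set Sc : Set V := ((({v} : Finset V) : Set V))ᶜ with hScdef
  have hmem : ∀ w : V, w ≠ v → w ∈ Sc := by
    intro w hw
    simp [Sc, hw]
  -- a k-coloring of G - v
  have hCk : (G.induce Sc).Colorable k := by
    have h := chromNum_colorable (G.induce Sc)
    rw [hSchrom, hk] at h
    simpa using h
  obtain ⟨C⟩ := hCk
  let col : V → Fin k := fun w => if h : w = v then ⟨0, hk0⟩ else C ⟨w, hmem w h⟩
  have hcol : ∀ w1 w2 : V, w1 ≠ v → w2 ≠ v → G.Adj w1 w2 → col w1 ≠ col w2 := by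
    intro w1 w2 h1 h2 hadj
    simp only [col, dif_neg h1, dif_neg h2]
    exact C.valid (by simpa using hadj)
  -- neighbors of v
  set T : Finset V := Finset.univ.filter (fun w => G.Adj v w) with hTdef
  have hTadj : ∀ w ∈ T, G.Adj v w := by
    intro w hw
    simpa [T] using hw
  have hT1 : T.card ≤ maxDeg G := by
    have hset : G.neighborSet v = ↑T := by
      ext w; simp [T, SimpleGraph.mem_neighborSet]
    have h2 : Nat.card (G.neighborSet v) = T.card := by
      rw [hset, Nat.card_coe_set_eq, Set.ncard_coe_finset]
    calc T.card = Nat.card (G.neighborSet v) := h2.symm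
      _ ≤ maxDeg G := by
          unfold maxDeg
          exact Finset.le_sup (f := fun w => Nat.card (G.neighborSet w)) (Finset.mem_univ v)
  have h2k : maxDeg G < 2 * k := by
    rw [hk] at hchi
    push_cast at hchi
    have : (maxDeg G : ℝ) < 2 * (k : ℝ) := by linarith
    exact_mod_cast this
  -- every color appears among the neighbors of v
  have hsurj : ∀ c : Fin k, ∃ w ∈ T, col w = c := by
    by_contra h
    push_neg at h
    obtain ⟨c, hc⟩ := h
    have hG : G.Colorable k := by
      refine ⟨SimpleGraph.Coloring.mk (fun w => if w = v then c else col w) ?_⟩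
      intro w1 w2 hadj
      by_cases h1 : w1 = v
      · rw [h1] at hadj
        have h2 : w2 ≠ v := (G.ne_of_adj hadj).symm
        simp only [if_pos h1, if_neg h2]
        have hw2T : w2 ∈ T := by simp [T, hadj]
        exact (hc w2 hw2T).symm
      · by_cases h2 : w2 = v
        · rw [h2] at hadj
          simp only [if_neg h1, if_pos h2]
          have hw1T : w1 ∈ T := by simp [T, hadj.symm]
          exact hc w1 hw1T
        · simp only [if_neg h1, if_neg h2]
          exact hcol w1 w2 h1 h2 hadj
    exact not_colorable_of_lt_chromNum G (by omega) hG
  -- some color appears exactly once among the neighbors of v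
  have hsum : ∑ c : Fin k, (T.filter (fun w => col w = c)).card = T.card :=
    (Finset.card_eq_sum_card_fiberwise (fun w _ => Finset.mem_univ (col w))).symm
  have hex : ∃ c : Fin k, (T.filter (fun w => col w = c)).card ≤ 1 := by
    by_contra h
    push_neg at h
    have h2 : 2 * k ≤ T.card := by
      calc 2 * k = ∑ _c : Fin k, 2 := by
            simp [Finset.sum_const, Finset.card_univ, Fintype.card_fin, mul_comm]
        _ ≤ ∑ c : Fin k, (T.filter (fun w => col w = c)).card :=
            Finset.sum_le_sum (fun c _ => h c)
        _ = T.card := hsum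
    omega
  obtain ⟨c, hc1⟩ := hex
  obtain ⟨u, huT, huc⟩ := hsurj c
  have huniq : ∀ w ∈ T, col w = c → w = u := by
    intro w hw hwc
    exact Finset.card_le_one.mp hc1 w (Finset.mem_filter.mpr ⟨hw, hwc⟩) u
      (Finset.mem_filter.mpr ⟨huT, huc⟩)
  have hvu : G.Adj v u := hTadj u huT
  have hune : u ≠ v := (G.ne_of_adj hvu).symm
  -- the edge to delete
  set F : Finset (Sym2 V) := {s(u, v)} with hFdef
  have hFsub : (↑F : Set (Sym2 V)) ⊆ G.edgeSet := by
    intro e heF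
    simp only [F, Finset.coe_singleton, Set.mem_singleton_iff] at heF
    subst heF
    exact hvu.symm
  have hnotmem : ∀ w1 w2 : V, s(w1, w2) ∉ (↑F : Set (Sym2 V)) → ¬(w1 = u ∧ w2 = v) := by
    intro w1 w2 hne ⟨h1, h2⟩
    subst h1; subst h2
    simp [F] at hne
  -- upper bound: deleting uv gives a k-colorable graph
  have hcolorable : (G.deleteEdges (↑F : Set (Sym2 V))).Colorable k := by
    refine ⟨SimpleGraph.Coloring.mk (fun w => if w = v then c else col w) ?_⟩
    intro w1 w2 hadj
    rw [SimpleGraph.deleteEdges_adj] at hadj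
    obtain ⟨hadj, hne⟩ := hadj
    by_cases h1 : w1 = v
    · rw [h1] at hadj hne
      have h2 : w2 ≠ v := (G.ne_of_adj hadj).symm
      simp only [if_pos h1, if_neg h2]
      intro hcontra
      have hw2T : w2 ∈ T := by simp [T, hadj]
      have hw2u : w2 = u := huniq w2 hw2T hcontra.symm
      rw [hw2u, Sym2.eq_swap] at hne
      exact hnotmem u v hne ⟨rfl, rfl⟩
    · by_cases h2 : w2 = v
      · rw [h2] at hadj hne
        simp only [if_neg h1, if_pos h2]
        intro hcontra
        have hw1T : w1 ∈ T := by simp [T, hadj.symm]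
        have hw1u : w1 = u := huniq w1 hw1T hcontra
        rw [hw1u] at hne
        exact hnotmem u v hne ⟨rfl, rfl⟩
      · simp only [if_neg h1, if_neg h2]
        exact hcol w1 w2 h1 h2 hadj
  have hupper : chromNum (G.deleteEdges (↑F : Set (Sym2 V))) ≤ k :=
    chromNum_le _ hcolorable
  -- lower bound: deleting one edge decreases chromatic number by at most one
  have hlow : ∀ n : ℕ, (G.deleteEdges (↑F : Set (Sym2 V))).Colorable n → k ≤ n := by
    rintro n ⟨D⟩
    have hGn : G.Colorable (n + 1) := by
      refine ⟨SimpleGraph.Coloring.mk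
        (fun w => if w = v then Fin.last n else (D w).castSucc) ?_⟩
      intro w1 w2 hadj
      by_cases h1 : w1 = v
      · rw [h1] at hadj
        have h2 : w2 ≠ v := (G.ne_of_adj hadj).symm
        simp only [if_pos h1, if_neg h2]
        exact (Fin.castSucc_lt_last (D w2)).ne'
      · by_cases h2 : w2 = v
        · simp only [if_neg h1, if_pos h2]
          exact (Fin.castSucc_lt_last (D w1)).ne
        · simp only [if_neg h1, if_neg h2]
          have hdel : (G.deleteEdges (↑F : Set (Sym2 V))).Adj w1 w2 := by
            rw [SimpleGraph.deleteEdges_adj]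
            refine ⟨hadj, ?_⟩
            intro hmem'
            simp only [F, Finset.coe_singleton, Set.mem_singleton_iff, Sym2.eq,
              Sym2.rel_iff', Prod.mk.injEq, Prod.swap_prod_mk] at hmem'
            rcases hmem' with ⟨-, h⟩ | ⟨h, -⟩
            · exact h2 h
            · exact h1 h
          intro hcontra
          exact D.valid hdel (Fin.castSucc_injective n hcontra)
    have := chromNum_le G hGn
    omega
  have hlower : k ≤ chromNum (G.deleteEdges (↑F : Set (Sym2 V))) :=
    le_csInf ⟨Fintype.card V, SimpleGraph.colorable_of_fintype _⟩ hlow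
  have heqk : chromNum (G.deleteEdges (↑F : Set (Sym2 V))) = chromNum G - 1 := by
    omega
  -- conclude
  have h1mem : 1 ∈ {m : ℕ | ∃ F' : Finset (Sym2 V), ↑F' ⊆ G.edgeSet ∧ F'.card = m ∧
      chromNum (G.deleteEdges ↑F') = chromNum G - 1} :=
    ⟨F, hFsub, by simp [F], heqk⟩
  have h0not : 0 ∉ {m : ℕ | ∃ F' : Finset (Sym2 V), ↑F' ⊆ G.edgeSet ∧ F'.card = m ∧
      chromNum (G.deleteEdges ↑F') = chromNum G - 1} := by
    rintro ⟨F', -, hF0, hFeq⟩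
    rw [Finset.card_eq_zero] at hF0
    subst hF0
    rw [Finset.coe_empty, SimpleGraph.deleteEdges_empty] at hFeq
    omega
  have hle : esChi G ≤ 1 := Nat.sInf_le h1mem
  have hmemInf := Nat.sInf_mem (⟨1, h1mem⟩ : Set.Nonempty _)
  rcases Nat.le_one_iff_eq_zero_or_eq_one.mp hle with h | h
  · rw [show esChi G = sInf _ from rfl] at h
    rw [h] at hmemInf
    exact absurd hmemInf h0not
  · exact h
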